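/- Let H be an m-hypergraph of size n with edge ideal I. A monomial prime P ⊆ K[x_1,...,x_n] is a non-minimal associated prime of (I^∨)^2 if and only if P = (x_{i_1},...,x_{i_q}) and there exists a 2-cover C that is not the sum of two 1-covers such that for each j ≤ q, the tuple C + e_{i_j} is a 2-cover that is a sum of two 1-covers, and for every nonzero D ∈ ℕ^n supported outside {i_1,...,i_q}, the tuple C + D is not a sum of two 1-covers. -/

import Mathlib

open MvPolynomial Finset

noncomputable section

/-- A `k`-cover of a hypergraph with edge set `E`: a nonzero tuple whose entries
sum to at least `k` over every edge. -/
def IsCover {V : Type*} (E : Finset (Finset V)) (k : ℕ) (a : V → ℕ) : Prop :=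
  a ≠ 0 ∧ ∀ e ∈ E, k ≤ ∑ i ∈ e, a i

/-- `a` is a sum of two 1-covers. -/
def SumTwoOneCovers {V : Type*} (E : Finset (Finset V)) (a : V → ℕ) : Prop :=
  ∃ b c : V → ℕ, IsCover E 1 b ∧ IsCover E 1 c ∧ a = b + c

/-- An independent set: no edge is contained in `S`. -/
def IsIndep {V : Type*} (E : Finset (Finset V)) (S : Finset V) : Prop :=
  ∀ e ∈ E, ¬ e ⊆ S

/-- `i` is in the neighborhood of `S`: `i ∉ S` and some edge consists of `i`
together with vertices of `S`. -/
def InNbhd {V : Type*} (E : Finset (Finset V)) (S : Finset V) (i : V) : Prop :=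
  i ∉ S ∧ ∃ e ∈ E, i ∈ e ∧ ∀ j ∈ e, j ≠ i → j ∈ S

open Classical in
/-- The 2-cover `A_S` attached to an independent set `S`:
`0` on `S`, `2` on `N(S)`, and `1` elsewhere. -/
noncomputable def indepCover {V : Type*} (E : Finset (Finset V)) (S : Finset V) : V → ℕ :=
  fun i => if i ∈ S then 0 else if InNbhd E S i then 2 else 1

/-- The Alexander dual of the edge ideal: `⋂_{edges e} (x_i : i ∈ e)`. -/
noncomputable def dualIdeal {V : Type*} (K : Type*) [Field K] (E : Finset (Finset V)) :
    Ideal (MvPolynomial V K) :=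
  ⨅ e ∈ E, Ideal.span (X '' (e : Set V))

/-- The monomial `x_1^{a_1} ⋯ x_n^{a_n}` attached to a tuple `a`. -/
noncomputable def coverMonomial {V : Type*} [Fintype V] (K : Type*) [Field K] (a : V → ℕ) :
    MvPolynomial V K :=
  ∏ i, X i ^ a i

/-- Connectedness of a hypergraph: any two vertices are linked by a chain of
vertices in which consecutive vertices share an edge. -/
def HConnected {V : Type*} (E : Finset (Finset V)) : Prop :=
  ∀ x y : V, ∃ l : List V, l.head? = some x ∧ l.getLast? = some y ∧
    l.Chain' fun a b => ∃ e ∈ E, a ∈ e ∧ b ∈ e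

/-- The cyclic 3-hypergraph with edges `{x_1,x_2,x_3}, {x_3,x_4,x_5}, …`
(0-based: `{2j, 2j+1, 2j+2}` modulo `n`). -/
def cyc3 (n : ℕ) (hn : 0 < n) : Finset (Finset (Fin n)) :=
  (Finset.range ((n + 1) / 2)).image fun j =>
    ({⟨(2 * j) % n, Nat.mod_lt _ hn⟩, ⟨(2 * j + 1) % n, Nat.mod_lt _ hn⟩,
      ⟨(2 * j + 2) % n, Nat.mod_lt _ hn⟩} : Finset (Fin n))

/-- The alternating tuple: `1` on odd vertices `x_1, x_3, …` (0-based even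
indices), `0` on even vertices. -/
def altCover (n : ℕ) : Fin n → ℕ :=
  fun i => if (i : ℕ) % 2 = 0 then 1 else 0


/-!
The ideal `J = I^∨` and its square are monomial ideals: `J²` consists of the polynomials all of
whose exponent vectors are sums of two 1-covers. For a monomial ideal with exponent set `s`, an
associated prime `P = (J² : f)` is generated by variables: if `p ∈ P` had leading monomial
`x^v ∉ P`, then `(J² : x^v f) = P` as well, while `x^v f` has fewer monomials outside `s`,
because the leading monomial of `p f` lies in `s`. Since `P` lies in the colon ideal of each
monomial of `f` and contains their intersection, primality gives `P = (J² : x^C)` for one of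
them, and `(x_i : i ∈ T) = (J² : x^C)` unwinds to the three conditions on `C`.

The minimal primes of `J²` are the `(x_i : i ∈ e)` for edges `e`. Under the conditions on `C`,
`T` contains an edge (otherwise `C` plus `2` outside `T` would be a sum of two 1-covers), and then
`T` is not an edge exactly when `C` is a 2-cover.
-/

lemma Submodule.colon_singleton_eq_of_sub_mem {R M : Type*} [CommRing R] [AddCommGroup M]
    [Module R M] {N : Submodule R M} {f g : M} (h : f - g ∈ N) : N.colon {f} = N.colon {g} := by
  ext r
  simp only [Submodule.mem_colon_singleton]
  have := N.smul_mem r h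
  rw [smul_sub] at this
  exact ⟨fun hf => by simpa using N.sub_mem hf this, fun hg => by simpa using N.add_mem hg this⟩

lemma isAssociatedPrime_quotient_iff {R : Type*} [CommRing R] [IsNoetherianRing R]
    {I P : Ideal R} : IsAssociatedPrime P (R ⧸ I) ↔ P.IsPrime ∧ ∃ f, P = I.colon {f} := by
  rw [isAssociatedPrime_iff, Ideal.Quotient.mk_surjective.exists]
  refine and_congr_right fun _ => exists_congr fun f => Eq.congr_right ?_
  ext r
  simp [Submodule.mem_colon_singleton, Algebra.smul_def, ← map_mul,
    Ideal.Quotient.eq_zero_iff_mem]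

namespace MvPolynomial

variable {σ R : Type*}

section RestrictSupport

lemma restrictSupport_sup_compl [CommSemiring R] (s : Set (σ →₀ ℕ)) :
    restrictSupport R s ⊔ restrictSupport R sᶜ = ⊤ := by
  rw [restrictSupport_eq_span, restrictSupport_eq_span, ← Submodule.span_union,
    ← Set.image_union, Set.union_compl_self, ← restrictSupport_eq_span, restrictSupport_univ]

lemma exists_sub_mem_restrictSupport [CommRing R] (s : Set (σ →₀ ℕ))
    (f : MvPolynomial σ R) :
    ∃ g, f - g ∈ restrictSupport R s ∧ ↑g.support ⊆ sᶜ ∧ g.support ⊆ f.support := by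
  have hf : f ∈ restrictSupport R s ⊔ restrictSupport R sᶜ := by
    rw [restrictSupport_sup_compl]
    exact Submodule.mem_top
  obtain ⟨f₁, hf₁, g, hg, rfl⟩ := Submodule.mem_sup.1 hf
  refine ⟨g, by rwa [add_sub_cancel_right], hg, fun d hd => ?_⟩
  have hds : d ∉ s := hg hd
  have : f₁.coeff d = 0 := notMem_support_iff.1 fun h => hds (hf₁ h)
  rw [mem_support_iff, coeff_add, this, zero_add]
  exact mem_support_iff.1 hd

lemma mem_restrictSupportIdeal_iff [CommSemiring R] {s : Set (σ →₀ ℕ)} (hs : IsUpperSet s)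
    {f : MvPolynomial σ R} : f ∈ restrictSupportIdeal R s hs ↔ ↑f.support ⊆ s :=
  Iff.rfl

lemma mul_monomial_mem_restrictSupportIdeal_iff [CommSemiring R] {s : Set (σ →₀ ℕ)}
    (hs : IsUpperSet s) (g : MvPolynomial σ R) (u : σ →₀ ℕ) :
    g * monomial u 1 ∈ restrictSupportIdeal R s hs ↔ ∀ d ∈ g.support, d + u ∈ s := by
  classical
  rw [mem_restrictSupportIdeal_iff]
  refine ⟨fun h d hd => h ?_, fun h e he => ?_⟩
  · rw [Finset.mem_coe, mem_support_iff, coeff_mul_monomial, mul_one]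
    exact mem_support_iff.1 hd
  · rw [Finset.mem_coe, mem_support_iff, coeff_mul_monomial'] at he
    split_ifs at he with hue
    · rw [mul_one] at he
      simpa [tsub_add_cancel_of_le hue] using h _ (mem_support_iff.2 he)
    · exact absurd rfl he

end RestrictSupport

section SpanX

lemma X_mem_span_X_image_iff [CommSemiring R] [Nontrivial R] {t : Set σ} {i : σ} :
    (X i : MvPolynomial σ R) ∈ Ideal.span (X '' t) ↔ i ∈ t := by
  classical
  simp [mem_ideal_span_X_image, support_X, Finsupp.single_apply]

lemma span_X_image_le_span_X_image_iff [CommSemiring R] [Nontrivial R] {t t' : Set σ} :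
    Ideal.span (X '' t : Set (MvPolynomial σ R)) ≤ Ideal.span (X '' t') ↔ t ⊆ t' := by
  refine ⟨fun h i hi => X_mem_span_X_image_iff.1 (h (X_mem_span_X_image_iff.2 hi)),
    fun h => Ideal.span_mono (Set.image_mono h)⟩

lemma span_X_image_injective [CommSemiring R] [Nontrivial R] :
    Function.Injective fun t : Set σ => Ideal.span (X '' t : Set (MvPolynomial σ R)) :=
  fun _ _ h => (span_X_image_le_span_X_image_iff.1 h.le).antisymm
    (span_X_image_le_span_X_image_iff.1 h.ge)

lemma exists_X_mem_of_monomial_mem [CommSemiring R] {Q : Ideal (MvPolynomial σ R)}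
    (hQ : Q.IsPrime) {d : σ →₀ ℕ} (hd : monomial d (1 : R) ∈ Q) :
    ∃ i, X i ∈ Q ∧ d i ≠ 0 := by
  rw [← prod_X_pow_eq_monomial, hQ.prod_mem_iff] at hd
  obtain ⟨i, hi, hiQ⟩ := hd
  exact ⟨i, hQ.mem_of_pow_mem _ hiQ, Finsupp.mem_support_iff.1 hi⟩

theorem isPrime_span_X_image [CommRing R] [IsDomain R] (t : Set σ) :
    (Ideal.span (X '' t : Set (MvPolynomial σ R))).IsPrime := by
  classical
  let φ : MvPolynomial σ R →ₐ[R] MvPolynomial σ R :=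
    aeval fun i => if i ∈ t then 0 else X i
  suffices Ideal.span (X '' t) = RingHom.ker φ from this ▸ RingHom.ker_isPrime φ
  have hle : Ideal.span (X '' t) ≤ RingHom.ker φ :=
    Ideal.span_le.2 (by rintro _ ⟨i, hi, rfl⟩; simp [φ, hi])
  refine le_antisymm hle fun p hp => ?_
  obtain ⟨q, hpq, hq, -⟩ := exists_sub_mem_restrictSupport {d | ∃ i ∈ t, d i ≠ 0} p
  have hpq' : p - q ∈ Ideal.span (X '' t) := mem_ideal_span_X_image.2 fun d hd => hpq hd
  have hφq : φ q = q := by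
    refine hom_congr_vars (f₂ := RingHom.id _) (by ext; simp [φ]) (fun i hi _ => ?_) rfl
    obtain ⟨d, hd, hid⟩ := (mem_vars_iff_mem_support i).1 hi
    have hit : i ∉ t := fun hit => hq hd ⟨i, hit, Finsupp.mem_support_iff.1 hid⟩
    simp [φ, hit]
  have hq0 : q = 0 := by
    rw [← hφq, ← RingHom.mem_ker]
    simpa using (RingHom.ker φ).sub_mem hp (hle hpq')
  rwa [hq0, sub_zero] at hpq'

end SpanX

section MonomialIdeal

variable {s : Set (σ →₀ ℕ)} (hs : IsUpperSet s)

lemma card_support_lt_of_subset_support_monomial_mul [CommSemiring R] {f g : MvPolynomial σ R}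
    {v w : σ →₀ ℕ} (hw : w ∈ f.support) (hvw : v + w ∈ s) (hgs : ↑g.support ⊆ sᶜ)
    (hgf : g.support ⊆ (monomial v 1 * f).support) : g.support.card < f.support.card := by
  classical
  have hsub : g.support ⊆ (f.support.image (v + ·)).erase (v + w) := by
    intro d hd
    have hd' := mem_support_iff.1 (hgf hd)
    rw [coeff_monomial_mul'] at hd'
    split_ifs at hd' with hvd
    · refine Finset.mem_erase.2
        ⟨fun hdw => hgs hd (hdw ▸ hvw), Finset.mem_image.2 ⟨d - v, ?_, ?_⟩⟩
      · exact mem_support_iff.2 fun h0 => hd' (by rw [h0, mul_zero])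
      · exact add_tsub_cancel_of_le hvd
    · exact absurd rfl hd'
  have := Finset.card_le_card hsub
  rw [Finset.card_erase_of_mem (Finset.mem_image_of_mem _ hw)] at this
  have := Finset.card_image_le (s := f.support) (f := (v + ·))
  have := Finset.card_pos.2 ⟨_, hw⟩
  omega

theorem monomial_degree_mem_of_eq_colon [CommRing R] [IsDomain R] (m : MonomialOrder σ)
    {P : Ideal (MvPolynomial σ R)} (hP : P.IsPrime)
    {f : MvPolynomial σ R} (hPf : P = (restrictSupportIdeal R s hs).colon {f})
    {p : MvPolynomial σ R} (hp : p ∈ P) (hp0 : p ≠ 0) : monomial (m.degree p) 1 ∈ P := by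
  classical
  set I := restrictSupportIdeal R s hs
  set v := m.degree p
  suffices key : ∀ N (f : MvPolynomial σ R), f.support.card = N → ↑f.support ⊆ sᶜ →
      P = I.colon {f} → monomial v 1 ∈ P by
    obtain ⟨f₀, hf₀, hfs, -⟩ := exists_sub_mem_restrictSupport s f
    exact key _ f₀ rfl hfs (hPf.trans (Submodule.colon_singleton_eq_of_sub_mem (N := I) hf₀))
  intro N
  induction N using Nat.strong_induction_on with
  | _ N ih =>
  intro f hN hfs hPf
  by_contra hv
  have hf0 : f ≠ 0 := by
    rintro rfl
    exact hP.ne_top (hPf.trans Submodule.colon_singleton_zero)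
  have hpf : p * f ∈ I := by
    simpa [hPf, Submodule.mem_colon_singleton] using hp
  have hw : m.degree f ∈ f.support := m.degree_mem_support hf0
  -- the leading monomial of `p * f` lies in `s`, although that of `f` does not
  have hvw : v + m.degree f ∈ s := by
    rw [← m.degree_mul hp0 hf0]
    exact (mem_restrictSupportIdeal_iff hs).1 hpf (m.degree_mem_support (mul_ne_zero hp0 hf0))
  obtain ⟨g, hfg, hgs, hgf⟩ := exists_sub_mem_restrictSupport s (monomial v 1 * f)
  have hPg : P = I.colon {g} := by
    rw [← Submodule.colon_singleton_eq_of_sub_mem (N := I) hfg]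
    ext r
    rw [Submodule.mem_colon_singleton, smul_eq_mul, ← mul_assoc, ← smul_eq_mul,
      ← Submodule.mem_colon_singleton, ← hPf, hP.mul_mem_iff_mem_or_mem, or_iff_left hv]
  have hcard := card_support_lt_of_subset_support_monomial_mul hw hvw hgs hgf
  exact hv (ih _ (hN ▸ hcard) g rfl hgs hPg)

theorem eq_span_X_of_eq_colon [CommRing R] [IsDomain R] [LinearOrder σ] [WellFoundedGT σ]
    {P : Ideal (MvPolynomial σ R)} (hP : P.IsPrime)
    {f : MvPolynomial σ R} (hPf : P = (restrictSupportIdeal R s hs).colon {f}) :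
    P = Ideal.span (X '' {i | X i ∈ P}) := by
  refine le_antisymm (fun p hp => ?_) (Ideal.span_le.2 (by rintro _ ⟨i, hi, rfl⟩; exact hi))
  obtain ⟨q, hpq, hq, -⟩ :=
    exists_sub_mem_restrictSupport {d | ∃ i, X i ∈ P ∧ d i ≠ 0} p
  have hpq' : p - q ∈ Ideal.span (X '' {i | X i ∈ P}) :=
    mem_ideal_span_X_image.2 fun d hd => hpq hd
  suffices q = 0 by rwa [this, sub_zero] at hpq'
  by_contra hq0
  have hqP : q ∈ P := by
    simpa using P.sub_mem hp (Ideal.span_le.2 (by rintro _ ⟨i, hi, rfl⟩; exact hi) hpq')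
  obtain ⟨i, hi⟩ := exists_X_mem_of_monomial_mem hP
    (monomial_degree_mem_of_eq_colon hs MonomialOrder.lex hP hPf hqP hq0)
  exact hq (MonomialOrder.lex.degree_mem_support hq0) ⟨i, hi⟩

theorem exists_eq_colon_monomial [CommSemiring R] [Nontrivial R] {P : Ideal (MvPolynomial σ R)}
    (hP : P.IsPrime) {t : Set σ} (hPt : P = Ideal.span (X '' t))
    {f : MvPolynomial σ R} (hPf : P = (restrictSupportIdeal R s hs).colon {f}) :
    ∃ u, P = (restrictSupportIdeal R s hs).colon {monomial u 1} := by
  set I := restrictSupportIdeal R s hs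
  have hle : ∀ u ∈ f.support, P ≤ I.colon {monomial u 1} := by
    intro u hu
    rw [hPt, Ideal.span_le]
    rintro _ ⟨i, hi, rfl⟩
    have hXf : X i * f ∈ I := by
      rw [← smul_eq_mul, ← Submodule.mem_colon_singleton, ← hPf, hPt]
      exact Ideal.subset_span ⟨i, hi, rfl⟩
    rw [SetLike.mem_coe, Submodule.mem_colon_singleton, smul_eq_mul,
      mul_monomial_mem_restrictSupportIdeal_iff, support_X]
    simp only [Finset.mem_singleton, forall_eq]
    refine (mem_restrictSupportIdeal_iff hs).1 hXf ?_
    rw [Finset.mem_coe, mem_support_iff, coeff_X_mul]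
    exact mem_support_iff.1 hu
  have hinf : f.support.inf (fun u => I.colon {monomial u 1}) ≤ P := by
    intro g hg
    rw [Submodule.mem_finsetInf] at hg
    rw [hPf, Submodule.mem_colon_singleton, smul_eq_mul, f.as_sum, Finset.mul_sum]
    refine I.sum_mem fun u hu => ?_
    have := I.mul_mem_left (C (coeff u f))
      (by simpa [Submodule.mem_colon_singleton] using hg u hu)
    rwa [← mul_assoc, mul_comm (C _), mul_assoc, C_mul_monomial, mul_one] at this
  obtain ⟨u, hu, hu'⟩ := hP.inf_le'.1 hinf
  exact ⟨u, le_antisymm (hle u hu) hu'⟩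

theorem span_X_image_eq_colon_monomial_iff [CommSemiring R] [Nontrivial R] {t : Set σ}
    {u : σ →₀ ℕ} :
    Ideal.span (X '' t) = (restrictSupportIdeal R s hs).colon {monomial u 1} ↔
      u ∉ s ∧ (∀ i ∈ t, u + Finsupp.single i 1 ∈ s) ∧
        ∀ d : σ →₀ ℕ, d ≠ 0 → (∀ i ∈ t, d i = 0) → u + d ∉ s := by
  classical
  have hmem : ∀ g : MvPolynomial σ R,
      g ∈ (restrictSupportIdeal R s hs).colon {monomial u 1} ↔
        ∀ d ∈ g.support, u + d ∈ s :=
    fun g => by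
    simp [Submodule.mem_colon_singleton, mul_monomial_mem_restrictSupportIdeal_iff, add_comm u]
  trans ∀ d : σ →₀ ℕ, (∃ i ∈ t, d i ≠ 0) ↔ u + d ∈ s
  · refine ⟨fun h d => ?_, fun h => Ideal.ext fun g => ?_⟩
    · have := SetLike.ext_iff.1 h (monomial d 1)
      simpa [mem_ideal_span_X_image, hmem, support_monomial] using this
    · rw [mem_ideal_span_X_image, hmem]
      exact forall₂_congr fun d _ => h d
  constructor
  · intro h
    refine ⟨fun hu => ?_, fun i hi => (h _).1 ⟨i, hi, by simp⟩, fun d hd0 hdt hd => ?_⟩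
    · simpa using (h 0).2 (by simpa using hu)
    · obtain ⟨i, hi, hdi⟩ := (h d).2 hd
      exact hdi (hdt i hi)
  · rintro ⟨hu, ht, hD⟩ d
    refine ⟨fun ⟨i, hi, hdi⟩ => hs ?_ (ht i hi), fun hd => ?_⟩
    · exact add_le_add_right (Finsupp.single_le_iff.2 (Nat.one_le_iff_ne_zero.2 hdi)) u
    · by_contra! hdt
      rcases eq_or_ne d 0 with rfl | hd0
      · exact hu (by simpa using hd)
      · exact hD d hd0 hdt hd

theorem isAssociatedPrime_quotient_restrictSupportIdeal_iff [CommRing R] [IsDomain R]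
    [IsNoetherianRing R] [Finite σ] [LinearOrder σ] {P : Ideal (MvPolynomial σ R)} :
    IsAssociatedPrime P (MvPolynomial σ R ⧸ restrictSupportIdeal R s hs) ↔
      ∃ t : Set σ, P = Ideal.span (X '' t) ∧ ∃ u : σ →₀ ℕ, u ∉ s ∧
        (∀ i ∈ t, u + Finsupp.single i 1 ∈ s) ∧
          ∀ d : σ →₀ ℕ, d ≠ 0 → (∀ i ∈ t, d i = 0) → u + d ∉ s := by
  rw [isAssociatedPrime_quotient_iff]
  constructor
  · rintro ⟨hP, f, hPf⟩
    have hPt := eq_span_X_of_eq_colon hs hP hPf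
    obtain ⟨u, hPu⟩ := exists_eq_colon_monomial hs hP hPt hPf
    exact ⟨_, hPt, u, (span_X_image_eq_colon_monomial_iff hs).1 (hPt ▸ hPu)⟩
  · rintro ⟨t, rfl, u, hu⟩
    exact ⟨isPrime_span_X_image t, _, (span_X_image_eq_colon_monomial_iff hs).2 hu⟩

end MonomialIdeal

end MvPolynomial

section Covers

variable {V : Type*} {E : Finset (Finset V)}

lemma IsCover.mono {k : ℕ} {a b : V → ℕ} (ha : IsCover E k a) (hab : a ≤ b) :
    IsCover E k b :=
  ⟨fun hb => ha.1 (nonpos_iff_eq_zero.1 (hb ▸ hab)),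
    fun e he => (ha.2 e he).trans (Finset.sum_le_sum fun i _ => hab i)⟩

lemma isCover_of_forall_le_sum (hE : E.Nonempty) {k : ℕ} (hk : k ≠ 0) {a : V → ℕ}
    (h : ∀ e ∈ E, k ≤ ∑ i ∈ e, a i) : IsCover E k a := by
  refine ⟨fun ha => ?_, h⟩
  obtain ⟨e, he⟩ := hE
  simpa [ha, hk] using h e he

lemma isCover_one_iff (hE : E.Nonempty) {a : V → ℕ} :
    IsCover E 1 a ↔ ∀ e ∈ E, ∃ i ∈ e, a i ≠ 0 := by
  refine ⟨fun ha e he => ?_, fun h => isCover_of_forall_le_sum hE one_ne_zero fun e he => ?_⟩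
  · simpa [Nat.one_le_iff_ne_zero, Finset.sum_eq_zero_iff] using ha.2 e he
  · simpa [Nat.one_le_iff_ne_zero, Finset.sum_eq_zero_iff] using h e he

lemma SumTwoOneCovers.mono {a b : V → ℕ} (ha : SumTwoOneCovers E a) (hab : a ≤ b) :
    SumTwoOneCovers E b := by
  obtain ⟨c, d, hc, hd, rfl⟩ := ha
  refine ⟨c + (b - (c + d)), d, hc.mono le_self_add, hd, funext fun j => ?_⟩
  have : c j + d j ≤ b j := hab j
  simp only [Pi.add_apply, Pi.sub_apply]
  omega

lemma SumTwoOneCovers.isCover_two {a : V → ℕ} (ha : SumTwoOneCovers E a) : IsCover E 2 a := by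
  obtain ⟨c, d, hc, hd, rfl⟩ := ha
  refine ⟨fun h0 => hc.1 (nonpos_iff_eq_zero.1 (h0 ▸ le_self_add)), fun e he => ?_⟩
  simpa [Finset.sum_add_distrib] using add_le_add (hc.2 e he) (hd.2 e he)

variable [DecidableEq V] {T : Finset V} {C : V → ℕ}

lemma isCover_two_of_add_single (hE : E.Nonempty) (hT : ∀ e ∈ E, ∃ i ∈ T, i ∉ e)
    (hC : ∀ i ∈ T, IsCover E 2 (C + Pi.single i 1)) : IsCover E 2 C := by
  refine isCover_of_forall_le_sum hE two_ne_zero fun e he => ?_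
  obtain ⟨i, hiT, hie⟩ := hT e he
  have := (hC i hiT).2 e he
  rwa [Finset.sum_congr rfl fun j hj => by
    rw [Pi.add_apply, Pi.single_eq_of_ne (ne_of_mem_of_not_mem hj hie), add_zero]] at this

/-- The two 1-covers are `1_{Tᶜ} + x` and `1_{Tᶜ} + (C - x)`; only the edges inside `T` need
`x` and `C - x`. -/
lemma sumTwoOneCovers_add_two_outside (hE : E.Nonempty) {x : V → ℕ} (hxC : x ≤ C)
    (hT : ∀ e ∈ E, e ⊆ T → 1 ≤ ∑ i ∈ e, x i ∧ 1 ≤ ∑ i ∈ e, (C - x) i) :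
    SumTwoOneCovers E (C + fun j => if j ∈ T then 0 else 2) := by
  set w : V → ℕ := fun j => if j ∈ T then 0 else 1
  have hcov : ∀ y : V → ℕ, (∀ e ∈ E, e ⊆ T → 1 ≤ ∑ i ∈ e, y i) →
      IsCover E 1 (w + y) := by
    refine fun y hy => isCover_of_forall_le_sum hE one_ne_zero fun e he => ?_
    by_cases heT : e ⊆ T
    · exact (hy e he heT).trans (Finset.sum_le_sum fun i _ => by simp)
    · obtain ⟨j, hje, hjT⟩ := Finset.not_subset.1 heT
      calc 1 ≤ (w + y) j := by simp [w, hjT]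
        _ ≤ ∑ i ∈ e, (w + y) i := Finset.single_le_sum (fun _ _ => Nat.zero_le _) hje
  refine ⟨w + x, w + (C - x), hcov x fun e he h => (hT e he h).1,
    hcov _ fun e he h => (hT e he h).2, funext fun j => ?_⟩
  have : x j ≤ C j := hxC j
  simp only [Pi.add_apply, Pi.sub_apply, w]
  split_ifs <;> omega

lemma not_sumTwoOneCovers_add_two_outside (hC : ¬ SumTwoOneCovers E C)
    (hD : ∀ D : V → ℕ, D ≠ 0 → (∀ i ∈ T, D i = 0) → ¬ SumTwoOneCovers E (C + D)) :
    ¬ SumTwoOneCovers E (C + fun j => if j ∈ T then 0 else 2) := by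
  by_cases hT : ∀ j, j ∈ T
  · have : (fun j => if j ∈ T then 0 else 2 : V → ℕ) = 0 := funext fun j => by simp [hT]
    rwa [this, add_zero]
  · obtain ⟨j, hj⟩ := not_forall.1 hT
    exact hD _ (fun h => by simpa [hj] using congrFun h j) fun i hi => by simp [hi]

lemma exists_subset_of_not_sumTwoOneCovers (hE : E.Nonempty) (hC : ¬ SumTwoOneCovers E C)
    (hD : ∀ D : V → ℕ, D ≠ 0 → (∀ i ∈ T, D i = 0) → ¬ SumTwoOneCovers E (C + D)) :
    ∃ e ∈ E, e ⊆ T := by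
  by_contra! h
  exact not_sumTwoOneCovers_add_two_outside hC hD
    (sumTwoOneCovers_add_two_outside hE (x := 0) (fun i => Nat.zero_le (C i))
      fun e he heT => absurd heT (h e he))

lemma notMem_of_isCover_two (hA : IsAntichain (· ⊆ ·) (E : Set (Finset V)))
    (hC2 : IsCover E 2 C) (hC : ¬ SumTwoOneCovers E C)
    (hD : ∀ D : V → ℕ, D ≠ 0 → (∀ i ∈ T, D i = 0) → ¬ SumTwoOneCovers E (C + D)) :
    T ∉ E := by
  intro hT
  obtain ⟨j, hjT, hj⟩ : ∃ j ∈ T, C j ≠ 0 := by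
    by_contra! h
    simpa [Finset.sum_eq_zero h] using hC2.2 T hT
  have hxC : Pi.single j 1 ≤ C := fun i => by
    rcases eq_or_ne i j with rfl | hij
    · simpa using Nat.one_le_iff_ne_zero.2 hj
    · simp [hij]
  refine not_sumTwoOneCovers_add_two_outside hC hD
    (sumTwoOneCovers_add_two_outside ⟨T, hT⟩ hxC fun e he heT => ?_)
  obtain rfl := hA.eq he hT heT
  have h1 : ∑ i ∈ e, Pi.single j 1 i = 1 := by simp [hjT]
  have h2 := hC2.2 e he
  simp only [Pi.sub_apply]
  rw [Finset.sum_tsub_distrib _ fun i _ => hxC i, h1]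
  omega

end Covers

section DualIdeal

variable {V K : Type*} [Field K] {E : Finset (Finset V)}

lemma isUpperSet_setOf_isCover (k : ℕ) : IsUpperSet {d : V →₀ ℕ | IsCover E k d} :=
  fun _ _ hab ha => IsCover.mono ha fun i => hab i

lemma isUpperSet_setOf_sumTwoOneCovers : IsUpperSet {d : V →₀ ℕ | SumTwoOneCovers E d} :=
  fun _ _ hab ha => SumTwoOneCovers.mono ha fun i => hab i

theorem dualIdeal_eq_restrictSupportIdeal (hE : E.Nonempty) :
    dualIdeal K E = restrictSupportIdeal K _ (isUpperSet_setOf_isCover (E := E) 1) := by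
  ext f
  simp only [dualIdeal, Submodule.mem_iInf, mem_ideal_span_X_image, mem_restrictSupportIdeal_iff,
    Set.subset_def, Finset.mem_coe, Set.mem_ofPred_eq, isCover_one_iff hE]
  exact ⟨fun h d hd e he => h e he d hd, fun h e he d hd => h d hd e he⟩

theorem sq_dualIdeal_eq_restrictSupportIdeal [Finite V] (hE : E.Nonempty) :
    dualIdeal K E ^ 2 = restrictSupportIdeal K _ (isUpperSet_setOf_sumTwoOneCovers (E := E)) := by
  rw [dualIdeal_eq_restrictSupportIdeal hE]
  apply Submodule.restrictScalars_injective K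
  rw [Submodule.restrictScalars_pow two_ne_zero, restrictScalars_restrictSupportIdeal,
    restrictScalars_restrictSupportIdeal, sq, ← restrictSupport_add]
  congr 1
  ext d
  simp only [Set.mem_add, Set.mem_ofPred_eq, SumTwoOneCovers]
  constructor
  · rintro ⟨b, hb, c, hc, rfl⟩
    exact ⟨b, c, hb, hc, Finsupp.coe_add b c⟩
  · rintro ⟨b, c, hb, hc, hd⟩
    refine ⟨Finsupp.equivFunOnFinite.symm b, by simpa using hb, Finsupp.equivFunOnFinite.symm c,
      by simpa using hc, DFunLike.coe_injective ?_⟩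
    simpa using hd.symm

theorem minimalPrimes_sq_dualIdeal (hA : IsAntichain (· ⊆ ·) (E : Set (Finset V))) :
    (dualIdeal K E ^ 2).minimalPrimes = (fun e : Finset V => Ideal.span (X '' ↑e)) '' E := by
  rw [← Ideal.radical_minimalPrimes, Ideal.radical_pow _ two_ne_zero, Ideal.radical_minimalPrimes]
  have hle : ∀ Q : Ideal (MvPolynomial V K), Q.IsPrime →
      (dualIdeal K E ≤ Q ↔ ∃ e ∈ E, Ideal.span (X '' (e : Set V)) ≤ Q) := fun Q hQ => by
    rw [dualIdeal, ← Finset.inf_eq_iInf, hQ.inf_le']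
  have hmem : ∀ e ∈ E, (Ideal.span (X '' (e : Set V) : Set (MvPolynomial V K))).IsPrime ∧
      dualIdeal K E ≤ Ideal.span (X '' (e : Set V)) :=
    fun e he => ⟨isPrime_span_X_image _, (hle _ (isPrime_span_X_image _)).2 ⟨e, he, le_rfl⟩⟩
  ext Q
  constructor
  · rintro ⟨⟨hQ, hJQ⟩, hmin⟩
    obtain ⟨e, he, heQ⟩ := (hle Q hQ).1 hJQ
    exact ⟨e, he, le_antisymm heQ (hmin (hmem e he) heQ)⟩
  · rintro ⟨e, he, rfl⟩
    refine ⟨hmem e he, fun Q ⟨hQ, hJQ⟩ hQe => ?_⟩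
    obtain ⟨e', he', he'Q⟩ := (hle Q hQ).1 hJQ
    obtain rfl : e' = e :=
      hA.eq he' he (Finset.coe_subset.1 (span_X_image_le_span_X_image_iff.1 (he'Q.trans hQe)))
    exact he'Q

lemma span_X_image_mem_minimalPrimes_sq_dualIdeal_iff
    (hA : IsAntichain (· ⊆ ·) (E : Set (Finset V))) {T : Finset V} :
    Ideal.span (X '' ↑T) ∈ (dualIdeal K E ^ 2).minimalPrimes ↔ T ∈ E := by
  simp only [minimalPrimes_sq_dualIdeal hA, Set.mem_image, Finset.mem_coe]
  exact ⟨fun ⟨e, he, h⟩ => Finset.coe_injective (span_X_image_injective h) ▸ he,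
    fun h => ⟨T, h, rfl⟩⟩

theorem isAssociatedPrime_sq_dualIdeal_iff [Finite V] [LinearOrder V] (hE : E.Nonempty)
    {P : Ideal (MvPolynomial V K)} :
    IsAssociatedPrime P (MvPolynomial V K ⧸ dualIdeal K E ^ 2) ↔
      ∃ T : Finset V, P = Ideal.span (X '' ↑T) ∧ ∃ C : V → ℕ, ¬ SumTwoOneCovers E C ∧
        (∀ i ∈ T, SumTwoOneCovers E (C + Pi.single i 1)) ∧
          ∀ D : V → ℕ, D ≠ 0 → (∀ i ∈ T, D i = 0) →
            ¬ SumTwoOneCovers E (C + D) := by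
  rw [sq_dualIdeal_eq_restrictSupportIdeal hE,
    isAssociatedPrime_quotient_restrictSupportIdeal_iff]
  constructor
  · rintro ⟨t, rfl, u, hu, ht, hD⟩
    lift t to Finset V using t.toFinite
    refine ⟨t, rfl, u, hu, fun i hi => ?_, fun D hD0 hDt hCD => ?_⟩
    · simpa [Finsupp.single_eq_pi_single] using ht i hi
    · refine hD (Finsupp.equivFunOnFinite.symm D) ?_ (by simpa using hDt) (by simpa using hCD)
      rwa [Ne, ← Finsupp.coe_eq_zero, Finsupp.coe_equivFunOnFinite_symm]
  · rintro ⟨T, rfl, C, hC, hT, hD⟩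
    refine ⟨T, rfl, Finsupp.equivFunOnFinite.symm C, by simpa using hC, fun i hi => ?_,
      fun d hd0 hdT hd => hD d (by simpa using hd0) hdT ?_⟩
    · simpa [Finsupp.single_eq_pi_single] using hT i hi
    · simpa using hd

end DualIdeal

theorem stmt5 {K : Type*} [Field K] {n m : ℕ} (E : Finset (Finset (Fin n)))
    (hE : E.Nonempty) (hm : ∀ e ∈ E, e.card = m) (P : Ideal (MvPolynomial (Fin n) K)) :
    (IsAssociatedPrime P (MvPolynomial (Fin n) K ⧸ ((dualIdeal K E) ^ 2)) ∧
        P ∉ ((dualIdeal K E) ^ 2).minimalPrimes) ↔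
      ∃ T : Finset (Fin n), P = Ideal.span (X '' (T : Set (Fin n))) ∧
        ∃ C : Fin n → ℕ, IsCover E 2 C ∧ ¬ SumTwoOneCovers E C ∧
          (∀ i ∈ T, IsCover E 2 (C + Pi.single i 1) ∧
            SumTwoOneCovers E (C + Pi.single i 1)) ∧
          (∀ D : Fin n → ℕ, D ≠ 0 → (∀ i ∈ T, D i = 0) →
            ¬ SumTwoOneCovers E (C + D)) := by
  have hA : IsAntichain (· ⊆ ·) (E : Set (Finset (Fin n))) := Set.Sized.isAntichain hm
  rw [isAssociatedPrime_sq_dualIdeal_iff hE]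
  constructor
  · rintro ⟨⟨T, rfl, C, hC, hCT, hD⟩, hmin⟩
    rw [span_X_image_mem_minimalPrimes_sq_dualIdeal_iff hA] at hmin
    obtain ⟨e, he, heT⟩ := exists_subset_of_not_sumTwoOneCovers hE hC hD
    have hTe : ∀ e' ∈ E, ∃ i ∈ T, i ∉ e' := fun e' he' => by
      by_contra! hTe'
      obtain rfl := hA.eq he he' (heT.trans hTe')
      exact hmin (Finset.Subset.antisymm hTe' heT ▸ he)
    exact ⟨T, rfl, C, isCover_two_of_add_single hE hTe fun i hi => (hCT i hi).isCover_two, hC,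
      fun i hi => ⟨(hCT i hi).isCover_two, hCT i hi⟩, hD⟩
  · rintro ⟨T, rfl, C, hC2, hC, hCT, hD⟩
    refine ⟨⟨T, rfl, C, hC, fun i hi => (hCT i hi).2, hD⟩, ?_⟩
    rw [span_X_image_mem_minimalPrimes_sq_dualIdeal_iff hA]
    exact notMem_of_isCover_two hA hC2 hC hD
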